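/- arXiv:1703.03998 — 2 statements merged into one kernel-verified Lean document; each statement's English description precedes it below -/
import Mathlib

section
/- Let B ⊆ V be internally near-matched for M with base vertex b, let P be an augmenting path, and let S be a maximal subpath of P all of whose edges lie in γ(B). If b is an endpoint of S, then S has even length; equivalently, S contains equally many matched and unmatched edges. -/
open SimpleGraph

attribute [local instance] Classical.propDecidable

variable {V : Type*}

def IsMatchingSet (G : SimpleGraph V) (M : Finset (Sym2 V)) : Prop :=
  (∀ e ∈ M, e ∈ G.edgeSet) ∧
    ∀ e ∈ M, ∀ f ∈ M, e ≠ f → ∀ v : V, v ∈ e → v ∉ f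

def IsFree (M : Finset (Sym2 V)) (v : V) : Prop := ∀ e ∈ M, v ∉ e

def IsAlternating (M : Finset (Sym2 V)) {G : SimpleGraph V} {u v : V}
    (P : G.Walk u v) : Prop :=
  List.Chain' (fun e f => ¬(e ∈ M ↔ f ∈ M)) P.edges

def IsAugmenting (M : Finset (Sym2 V)) {G : SimpleGraph V} {f₁ f₂ : V}
    (P : G.Walk f₁ f₂) : Prop :=
  P.IsPath ∧ f₁ ≠ f₂ ∧ IsFree M f₁ ∧ IsFree M f₂ ∧ IsAlternating M P

noncomputable def pathWeight (w : Sym2 V → ℝ) (M : Finset (Sym2 V)) {G : SimpleGraph V}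
    {u v : V} (P : G.Walk u v) : ℝ :=
  ((P.edges.filter fun e => e ∉ M).map w).sum -
    ((P.edges.filter fun e => e ∈ M).map w).sum

def InternallyNearMatched (M : Finset (Sym2 V)) (B : Finset V) (b : V) : Prop :=
  b ∈ B ∧ (∀ v ∈ B, s(b, v) ∉ M) ∧
    ∀ v ∈ B, v ≠ b → ∃ u ∈ B, u ≠ v ∧ s(u, v) ∈ M

noncomputable def dualLoad (y : V → ℝ) (𝓑 : Finset (Finset V)) (z : Finset V → ℝ)
    (u v : V) : ℝ :=
  y u + y v + ∑ B ∈ 𝓑.filter (fun B => u ∈ B ∧ v ∈ B), z B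

def Dominated (w : Sym2 V → ℝ) (y : V → ℝ) (𝓑 : Finset (Finset V)) (z : Finset V → ℝ)
    (u v : V) : Prop :=
  w s(u, v) ≤ dualLoad y 𝓑 z u v

def Tight (w : Sym2 V → ℝ) (y : V → ℝ) (𝓑 : Finset (Finset V)) (z : Finset V → ℝ)
    (u v : V) : Prop :=
  w s(u, v) = dualLoad y 𝓑 z u v

/-! Membership in `M` flips along the alternating path `P`, so the segment has even length iff
its first and last edges differ in membership in `M`. The edge of the segment at `b` lies in
`γ(B)` and contains `b`, so it is unmatched. The other end `v` of the segment lies in `B \ {b}`,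
so it is matched inside `B`; in particular `v` is not an end of `P`. By maximality the edge of
`P` leaving the segment at `v` is not in `γ(B)`, so it is not the matching edge of `v`, and
alternation makes the segment's edge at `v` matched. -/

namespace List

variable {α : Type*} {p : α → Prop}

theorem even_length_iff_of_alternating :
    ∀ {L : List α}, L.IsChain (fun a c => ¬(p a ↔ p c)) → (h : L ≠ []) →
      (Even L.length ↔ ¬(p (L.head h) ↔ p (L.getLast h)))
  | [_], _, _ => by simp
  | a :: c :: t, hL, _ => by
    obtain ⟨hac, hct⟩ := isChain_cons_cons.mp hL
    have ih := even_length_iff_of_alternating hct (cons_ne_nil c t)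
    rw [length_cons, Nat.even_add_one, ih, head_cons, getLast_cons_cons, head_cons]
    tauto

theorem even_iff_of_alternating_of_add_le {L : List α}
    (hL : L.IsChain (fun a c => ¬(p a ↔ p c))) {i n : ℕ} (hn : 0 < n)
    (hin : i + n ≤ L.length) : Even n ↔ ¬(p L[i] ↔ p L[i + n - 1]) := by
  have hlen : ((L.drop i).take n).length = n := by simp only [length_take, length_drop]; omega
  have hS : (L.drop i).take n ≠ [] := ne_nil_of_length_pos (by omega)
  have hidx : i + (n - 1) = i + n - 1 := by omega
  simpa [head_eq_getElem, getLast_eq_getElem, hlen, hidx] using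
    even_length_iff_of_alternating ((hL.drop i).take n) hS

theorem getElem_mem_take_drop {L : List α} {i n j : ℕ} (hij : i ≤ j) (hjn : j < i + n)
    (hj : j < L.length) : L[j] ∈ (L.drop i).take n :=
  mem_iff_getElem.mpr ⟨j - i, by simp only [length_take, length_drop]; omega, by
    simp only [getElem_take, getElem_drop, Nat.add_sub_cancel' hij]⟩

theorem length_filter_eq_of_alternating [DecidablePred p] :
    ∀ {L : List α}, L.IsChain (fun a c => ¬(p a ↔ p c)) → Even L.length →
      (L.filter (fun x => p x)).length = (L.filter (fun x => ¬p x)).length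
  | [], _, _ => rfl
  | [_], _, h => by simp at h
  | a :: c :: t, hL, h => by
    obtain ⟨hac, hct⟩ := isChain_cons_cons.mp hL
    have ih := length_filter_eq_of_alternating hct.tail (by simpa [Nat.even_add_one] using h)
    by_cases ha : p a <;> by_cases hc : p c <;> simp_all

end List

theorem SimpleGraph.Walk.getVert_mem_getElem_edges {G : SimpleGraph V} {u v : V}
    (P : G.Walk u v) {k : ℕ} (hk : k < P.edges.length) : P.getVert k ∈ P.edges[k] := by
  rw [P.getElem_edges hk]
  exact Sym2.mem_mk_left _ _

theorem SimpleGraph.Walk.getVert_succ_mem_getElem_edges {G : SimpleGraph V} {u v : V}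
    (P : G.Walk u v) {k : ℕ} (hk : k < P.edges.length) : P.getVert (k + 1) ∈ P.edges[k] := by
  rw [P.getElem_edges hk]
  exact Sym2.mem_mk_right _ _

theorem IsMatchingSet.eq_of_mem_of_mem {G : SimpleGraph V} {M : Finset (Sym2 V)}
    (hM : IsMatchingSet G M) {e f : Sym2 V} (he : e ∈ M) (hf : f ∈ M) {v : V}
    (hve : v ∈ e) (hvf : v ∈ f) : e = f :=
  by_contra fun hne => hM.2 e he f hf hne v hve hvf

namespace InternallyNearMatched

variable {M : Finset (Sym2 V)} {B : Finset V} {b : V}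

theorem not_mem_of_base_mem (hB : InternallyNearMatched M B b) {e : Sym2 V}
    (heB : e ∈ B.sym2) (hbe : b ∈ e) : e ∉ M := by
  obtain ⟨v, rfl⟩ := Sym2.mem_iff_exists.mp hbe
  exact hB.2.1 v (Finset.mk_mem_sym2_iff.mp heB).2

theorem not_isFree (hB : InternallyNearMatched M B b) {v : V} (hv : v ∈ B) (hvb : v ≠ b) :
    ¬IsFree M v := by
  obtain ⟨u, -, -, huv⟩ := hB.2.2 v hv hvb
  exact fun hfree => hfree _ huv (Sym2.mem_mk_right u v)

theorem mem_sym2_of_mem_matching {G : SimpleGraph V} (hB : InternallyNearMatched M B b)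
    (hM : IsMatchingSet G M) {v : V} (hv : v ∈ B) (hvb : v ≠ b) {f : Sym2 V} (hf : f ∈ M)
    (hvf : v ∈ f) : f ∈ B.sym2 := by
  obtain ⟨u, huB, -, huv⟩ := hB.2.2 v hv hvb
  rw [hM.eq_of_mem_of_mem hf huv hvf (Sym2.mem_mk_right u v)]
  exact Finset.mk_mem_sym2_iff.mpr ⟨huB, hv⟩

end InternallyNearMatched

theorem IsAlternating.getElem_edges_succ_mem_iff {G : SimpleGraph V} {M : Finset (Sym2 V)}
    {u v : V} {P : G.Walk u v} (hP : IsAlternating M P) {k : ℕ}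
    (hk : k + 1 < P.edges.length) : P.edges[k + 1] ∈ M ↔ P.edges[k] ∉ M :=
  (not_iff.mp (List.isChain_iff_getElem.mp hP k hk)).symm

namespace IsAugmenting

variable {G : SimpleGraph V} {M : Finset (Sym2 V)} {f₁ f₂ : V} {P : G.Walk f₁ f₂}

theorem pos_of_not_isFree (hP : IsAugmenting M P) {j : ℕ} (hj : ¬IsFree M (P.getVert j)) :
    0 < j :=
  Nat.pos_of_ne_zero fun h => hj (by rw [h, P.getVert_zero]; exact hP.2.2.1)

theorem lt_length_of_not_isFree (hP : IsAugmenting M P) {j : ℕ}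
    (hj : ¬IsFree M (P.getVert j)) : j < P.edges.length := by
  rw [P.length_edges]
  by_contra! h
  exact hj (by rw [P.getVert_of_length_le h]; exact hP.2.2.2.1)

variable {B : Finset V} {b : V}

theorem getElem_edges_mem_of_exit_left (hM : IsMatchingSet G M)
    (hB : InternallyNearMatched M B b) (hP : IsAugmenting M P) {j : ℕ}
    (hj : j < P.edges.length) (hvB : P.getVert j ∈ B) (hvb : P.getVert j ≠ b)
    (hexit : j = 0 ∨ ∃ h : j - 1 < P.edges.length, P.edges[j - 1] ∉ B.sym2) :
    P.edges[j] ∈ M := by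
  have hmatched := hB.not_isFree hvB hvb
  obtain ⟨k, rfl⟩ := Nat.exists_eq_add_one.mpr (hP.pos_of_not_isFree hmatched)
  obtain ⟨hk, hexit⟩ : ∃ h : k < P.edges.length, P.edges[k] ∉ B.sym2 := by simpa using hexit
  have hprev : P.edges[k] ∉ M := fun hM' =>
    hexit (hB.mem_sym2_of_mem_matching hM hvB hvb hM' (P.getVert_succ_mem_getElem_edges hk))
  exact (hP.2.2.2.2.getElem_edges_succ_mem_iff hj).mpr hprev

theorem getElem_edges_pred_mem_of_exit_right (hM : IsMatchingSet G M)
    (hB : InternallyNearMatched M B b) (hP : IsAugmenting M P) {j : ℕ} (hj₀ : 0 < j)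
    (hj : j ≤ P.edges.length) (hvB : P.getVert j ∈ B) (hvb : P.getVert j ≠ b)
    (hexit : j = P.edges.length ∨ ∃ h : j < P.edges.length, P.edges[j] ∉ B.sym2) :
    P.edges[j - 1] ∈ M := by
  have hmatched := hB.not_isFree hvB hvb
  have hjl := hP.lt_length_of_not_isFree hmatched
  obtain ⟨k, rfl⟩ := Nat.exists_eq_add_one.mpr hj₀
  obtain ⟨_, hexit⟩ := hexit.resolve_left hjl.ne
  have hnext : P.edges[k + 1] ∉ M := fun hM' =>
    hexit (hB.mem_sym2_of_mem_matching hM hvB hvb hM' (P.getVert_mem_getElem_edges hjl))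
  simpa [hnext] using hP.2.2.2.2.getElem_edges_succ_mem_iff hjl

end IsAugmenting

theorem maximal_subpath_in_blossom_at_base_even
    {V : Type*} (G : SimpleGraph V) (M : Finset (Sym2 V))
    (B : Finset V) (b : V)
    (hM : IsMatchingSet G M)
    (hB : InternallyNearMatched M B b)
    {f₁ f₂ : V} (P : G.Walk f₁ f₂) (hP : IsAugmenting M P)
    (i n : ℕ) (hn : 1 ≤ n) (hin : i + n ≤ P.edges.length)
    (hsub : ∀ e ∈ (P.edges.drop i).take n, ∀ x ∈ e, x ∈ B)
    (hmaxl : i = 0 ∨ ∃ h : i - 1 < P.edges.length, ¬ ∀ x ∈ P.edges[i-1]'h, x ∈ B)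
    (hmaxr : i + n = P.edges.length ∨
      ∃ h : i + n < P.edges.length, ¬ ∀ x ∈ P.edges[i+n]'h, x ∈ B)
    (hend : b = P.getVert i ∨ b = P.getVert (i + n)) :
    Even n ∧
      (((P.edges.drop i).take n).filter fun e => e ∈ M).length =
        (((P.edges.drop i).take n).filter fun e => e ∉ M).length := by
  simp only [← Finset.mem_sym2_iff] at hsub hmaxl hmaxr
  have halt : P.edges.IsChain (fun e f => ¬(e ∈ M ↔ f ∈ M)) := hP.2.2.2.2
  have hfirstB : P.edges[i] ∈ B.sym2 := hsub _ (List.getElem_mem_take_drop le_rfl (by omega) _)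
  have hlastB : P.edges[i + n - 1] ∈ B.sym2 :=
    hsub _ (List.getElem_mem_take_drop (by omega) (by omega) _)
  have hleft : P.getVert i ∈ P.edges[i] := P.getVert_mem_getElem_edges _
  have hright : P.getVert (i + n) ∈ P.edges[i + n - 1] := by
    have hsucc : i + n - 1 + 1 = i + n := by omega
    simpa only [hsucc] using P.getVert_succ_mem_getElem_edges (k := i + n - 1) (by omega)
  have hends : P.getVert i ≠ P.getVert (i + n) := fun h => by
    have := hP.1.getVert_injOn (show i ≤ P.length by rw [← P.length_edges]; omega)
      (show i + n ≤ P.length by rw [← P.length_edges]; omega) h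
    omega
  have heven : Even n := by
    rw [List.even_iff_of_alternating_of_add_le halt hn hin]
    rcases hend with rfl | rfl
    · have hfirst := hB.not_mem_of_base_mem hfirstB hleft
      have hlastM := IsAugmenting.getElem_edges_pred_mem_of_exit_right hM hB hP (by omega) hin
        (Finset.mem_sym2_iff.mp hlastB _ hright) hends.symm hmaxr
      tauto
    · have hlastM := hB.not_mem_of_base_mem hlastB hright
      have hfirst := IsAugmenting.getElem_edges_mem_of_exit_left hM hB hP (by omega)
        (Finset.mem_sym2_iff.mp hfirstB _ hleft) hends hmaxl
      tauto
  refine ⟨heven, List.length_filter_eq_of_alternating ((halt.drop i).take n) ?_⟩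
  rwa [List.length_take, List.length_drop, min_eq_left (by omega)]
end

section
/- Let B ⊆ V be internally near-matched for M with base vertex b, let P be an augmenting path, and let S be a maximal subpath of P all of whose edges lie in γ(B). If b is not an endpoint of S, then the first and last edges of S are matched; consequently S contains exactly one more matched edge than unmatched edges. -/
open SimpleGraph

attribute [local instance] Classical.propDecidable

variable {V : Type*}

/-!
At a vertex `v ≠ b` of `B` the matched edge stays inside `B`, so a path edge at `v` that leaves
`B` is unmatched, and by alternation the edge of `S` at `v` is matched. The endpoints of `S` are
such vertices: they lie in `B`, differ from `b`, are not free (only `b` can be free in `B`), hence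
are interior vertices of `P` whose other path edge leaves `B` by maximality of `S`. An alternating
list that begins and ends with a matched edge has one more matched than unmatched edge.
-/

theorem List.IsChain.length_filter_eq_length_filter_not_add_one {α : Type*} (p : α → Prop)
    [DecidablePred p] :
    ∀ {l : List α}, l.IsChain (fun a b => ¬(p a ↔ p b)) → ∀ (h : l ≠ []),
      p (l.head h) → p (l.getLast h) →
        (l.filter fun a => p a).length = (l.filter fun a => ¬p a).length + 1
  | [a], _, _, ha, _ => by simp_all
  | a :: b :: l, hchain, _, (ha : p a), hlast => by
    obtain ⟨hab, hchain⟩ := isChain_cons_cons.mp hchain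
    have hb : ¬p b := by simp_all
    cases l with
    | nil => exact absurd (by simpa using hlast) hb
    | cons c l =>
      have hc : p c := by simp_all [isChain_cons_cons]
      have ih := (isChain_cons_cons.mp hchain).2.length_filter_eq_length_filter_not_add_one p
        (cons_ne_nil c l) hc (by simpa using hlast)
      simp [ha, hb, hc] at ih ⊢
      omega

theorem IsAlternating.not_iff_getElem {V : Type*} {G : SimpleGraph V} {M : Finset (Sym2 V)}
    {u v : V} {P : G.Walk u v} (hP : IsAlternating M P) {j : ℕ} (hj : j + 1 < P.edges.length) :
    ¬(P.edges[j] ∈ M ↔ P.edges[j + 1] ∈ M) :=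
  List.isChain_iff_getElem.mp hP j hj

namespace InternallyNearMatched

variable {V : Type*} {M : Finset (Sym2 V)} {B : Finset V} {b v : V}

theorem eq_of_isFree (hB : InternallyNearMatched M B b) (hvB : v ∈ B) (hv : IsFree M v) :
    v = b := by
  by_contra hvb
  obtain ⟨u, -, -, huv⟩ := hB.2.2 v hvB hvb
  exact hv _ huv (Sym2.mem_mk_right u v)

theorem forall_mem_of_mem {G : SimpleGraph V} (hM : IsMatchingSet G M)
    (hB : InternallyNearMatched M B b) (hvB : v ∈ B) (hvb : v ≠ b) {e : Sym2 V} (he : e ∈ M)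
    (hve : v ∈ e) : ∀ x ∈ e, x ∈ B := by
  obtain ⟨u, huB, -, huv⟩ := hB.2.2 v hvB hvb
  obtain rfl : e = s(u, v) := by_contra fun hne => hM.2 e he _ huv hne v hve (Sym2.mem_mk_right u v)
  intro x hx
  rcases Sym2.mem_iff.mp hx with rfl | rfl <;> assumption

theorem mem_of_not_forall_mem {G : SimpleGraph V} (hM : IsMatchingSet G M)
    (hB : InternallyNearMatched M B b) {f₁ f₂ : V} {P : G.Walk f₁ f₂} (hP : IsAlternating M P)
    {j : ℕ} (hj : j + 1 < P.edges.length) (hvB : P.getVert (j + 1) ∈ B)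
    (hvb : P.getVert (j + 1) ≠ b) :
    ((¬∀ x ∈ P.edges[j], x ∈ B) → P.edges[j + 1] ∈ M) ∧
      ((¬∀ x ∈ P.edges[j + 1], x ∈ B) → P.edges[j] ∈ M) := by
  have halt := hP.not_iff_getElem hj
  have hleft : P.getVert (j + 1) ∈ P.edges[j] := by simp [Walk.getElem_edges]
  have hright : P.getVert (j + 1) ∈ P.edges[j + 1] := by simp [Walk.getElem_edges]
  constructor
  · intro hout
    have := mt (hB.forall_mem_of_mem hM hvB hvb · hleft) hout
    tauto
  · intro hout
    have := mt (hB.forall_mem_of_mem hM hvB hvb · hright) hout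
    tauto

theorem getElem_edges_mem_of_enter {G : SimpleGraph V} (hM : IsMatchingSet G M)
    (hB : InternallyNearMatched M B b) {f₁ f₂ : V} {P : G.Walk f₁ f₂} (hfree : IsFree M f₁)
    (hP : IsAlternating M P) {i : ℕ} (hi : i < P.edges.length) (hvB : P.getVert i ∈ B)
    (hvb : P.getVert i ≠ b)
    (hmax : i = 0 ∨ ∃ h : i - 1 < P.edges.length, ¬∀ x ∈ P.edges[i - 1]'h, x ∈ B) :
    P.edges[i] ∈ M := by
  obtain ⟨k, rfl⟩ : ∃ k, i = k + 1 := Nat.exists_eq_succ_of_ne_zero fun hi =>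
    hvb (hB.eq_of_isFree hvB (by simpa [hi] using hfree))
  obtain ⟨_, hout⟩ := hmax.resolve_left k.succ_ne_zero
  exact (hB.mem_of_not_forall_mem hM hP hi hvB hvb).1 hout

theorem getElem_edges_mem_of_exit {G : SimpleGraph V} (hM : IsMatchingSet G M)
    (hB : InternallyNearMatched M B b) {f₁ f₂ : V} {P : G.Walk f₁ f₂} (hfree : IsFree M f₂)
    (hP : IsAlternating M P) {j : ℕ} (hj : 0 < j) (hvB : P.getVert j ∈ B) (hvb : P.getVert j ≠ b)
    (hmax : j = P.edges.length ∨ ∃ h : j < P.edges.length, ¬∀ x ∈ P.edges[j]'h, x ∈ B) :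
    P.edges[j - 1]'(by grind) ∈ M := by
  have hj_ne : j ≠ P.edges.length := fun hj =>
    hvb (hB.eq_of_isFree hvB (by simpa [hj, Walk.length_edges] using hfree))
  obtain ⟨h, hout⟩ := hmax.resolve_left hj_ne
  obtain ⟨k, rfl⟩ : ∃ k, j = k + 1 := ⟨j - 1, by omega⟩
  simpa using (hB.mem_of_not_forall_mem hM hP h hvB hvb).2 hout

end InternallyNearMatched

theorem maximal_subpath_in_blossom_avoiding_base
    {V : Type*} (G : SimpleGraph V) (M : Finset (Sym2 V))
    (B : Finset V) (b : V)
    (hM : IsMatchingSet G M)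
    (hB : InternallyNearMatched M B b)
    {f₁ f₂ : V} (P : G.Walk f₁ f₂) (hP : IsAugmenting M P)
    (i n : ℕ) (hn : 1 ≤ n) (hin : i + n ≤ P.edges.length)
    (hsub : ∀ e ∈ (P.edges.drop i).take n, ∀ x ∈ e, x ∈ B)
    (hmaxl : i = 0 ∨ ∃ h : i - 1 < P.edges.length, ¬ ∀ x ∈ P.edges[i-1]'h, x ∈ B)
    (hmaxr : i + n = P.edges.length ∨
      ∃ h : i + n < P.edges.length, ¬ ∀ x ∈ P.edges[i+n]'h, x ∈ B)
    (hend : b ≠ P.getVert i ∧ b ≠ P.getVert (i + n)) :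
    (∀ h : (P.edges.drop i).take n ≠ [],
      ((P.edges.drop i).take n).head h ∈ M ∧
        ((P.edges.drop i).take n).getLast h ∈ M) ∧
      (((P.edges.drop i).take n).filter fun e => e ∈ M).length =
        (((P.edges.drop i).take n).filter fun e => e ∉ M).length + 1 := by
  obtain ⟨-, -, hfree₁, hfree₂, halt⟩ := hP
  have hS_len : ((P.edges.drop i).take n).length = n := by
    simp only [List.length_take, List.length_drop]; omega
  have hS_ne : (P.edges.drop i).take n ≠ [] := List.ne_nil_of_length_pos (by omega)
  have hS_sub : ∀ k (hk : k < n), ∀ x ∈ P.edges[i + k], x ∈ B := fun k hk =>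
    hsub _ (List.mem_iff_getElem.mpr ⟨k, by omega, by simp⟩)
  have hv_first : P.getVert i ∈ B := hS_sub 0 hn _ (by simp [Walk.getElem_edges])
  have hv_last : P.getVert (i + n) ∈ B :=
    hS_sub (n - 1) (by omega) _ <| by
      simp [Walk.getElem_edges, show i + (n - 1) + 1 = i + n by omega]
  have hS_head : ((P.edges.drop i).take n).head hS_ne ∈ M := by
    simpa [List.head_take, List.head_drop] using
      hB.getElem_edges_mem_of_enter hM hfree₁ halt (by omega) hv_first hend.1.symm hmaxl
  have hS_last : ((P.edges.drop i).take n).getLast hS_ne ∈ M := by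
    simpa [List.getLast_eq_getElem, hS_len, show i + (n - 1) = i + n - 1 by omega] using
      hB.getElem_edges_mem_of_exit hM hfree₂ halt (by omega) hv_last hend.2.symm hmaxr
  exact ⟨fun _ => ⟨hS_head, hS_last⟩,
    ((halt.drop i).take n).length_filter_eq_length_filter_not_add_one _ hS_ne hS_head hS_last⟩
end
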